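/- Let n be a positive odd integer and let U be a rational spectral unit of finite order (an n×n circulant matrix with rational entries satisfying U·Uᵀ = I and U^m = I for some m ≥ 1). Then every eigenvalue of U is a 2n-th root of unity; that is, every Fourier coefficient ξ_l of its first column u satisfies ξ_l^{2n} = 1. -/

import Mathlib

/-!
Every additive character `ψ` of `ZMod n` is an eigenvector of the circulant matrix `M(u)`, and
the eigenvalue of `t ↦ exp(-2πi·l·t/n)` is `ξ_l`; so `M(u)^m = 1` forces `ξ_l^m = 1`. On the other
hand `ξ_l` is a rational combination of `n`-th roots of unity, hence lies in the cyclotomic field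
`ℚ(ζ_n)`. For odd `n` the roots of unity of `ℚ(ζ_n)` are exactly the `2n`-th roots of unity.
-/

open Matrix

/-- The Fourier coefficient of `u : ZMod n → ℂ` at `l`:
`ξ_l = ∑_{t} u(t) · exp(2πi·l·t/n)`. -/
noncomputable def zmodFourier (n : ℕ) [NeZero n] (u : ZMod n → ℂ) (l : ZMod n) : ℂ :=
  ∑ t : ZMod n, u t * Complex.exp (2 * Real.pi * Complex.I * ((l.val : ℂ) * (t.val : ℂ)) / n)

theorem Matrix.pow_mulVec_eq_pow_smul {ι R : Type*} [Fintype ι] [DecidableEq ι] [CommSemiring R]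
    {A : Matrix ι ι R} {v : ι → R} {c : R} (h : A *ᵥ v = c • v) (m : ℕ) :
    (A ^ m) *ᵥ v = c ^ m • v := by
  induction m with
  | zero => simp
  | succ m ih => rw [pow_succ', ← mulVec_mulVec, ih, mulVec_smul, h, smul_smul, ← pow_succ]

section Circulant

variable {G R : Type*} [AddCommGroup G] [Fintype G] [CommRing R]

theorem Matrix.circulant_mulVec_addChar (u : G → R) (ψ : AddChar G R) :
    circulant u *ᵥ ⇑ψ = (∑ k, u k * ψ (-k)) • ⇑ψ := by
  ext i
  calc (circulant u *ᵥ ⇑ψ) i = ∑ j, u (i - j) * ψ j := rfl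
    _ = ∑ k, u k * ψ (i - k) :=
      Fintype.sum_equiv (Equiv.subLeft i) _ _ fun j => by simp [Equiv.subLeft]
    _ = (∑ k, u k * ψ (-k)) * ψ i := by
      rw [Finset.sum_mul]
      refine Finset.sum_congr rfl fun k _ => ?_
      rw [sub_eq_neg_add, AddChar.map_add_eq_mul, mul_assoc]

theorem Matrix.addChar_sum_pow_eq_one_of_circulant_pow_eq_one [DecidableEq G] {u : G → R} {m : ℕ}
    (hm : circulant u ^ m = 1) (ψ : AddChar G R) : (∑ k, u k * ψ (-k)) ^ m = 1 := by
  have h := congrFun (pow_mulVec_eq_pow_smul (circulant_mulVec_addChar u ψ) m) 0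
  simpa [hm] using h.symm

end Circulant

theorem IsCyclotomicExtension.pow_two_mul_eq_one_of_isOfFinOrder {n : ℕ} [NeZero n] (hn : Odd n)
    {K : Type*} [Field K] [NumberField K] [IsCyclotomicExtension {n} ℚ K] {x : K}
    (hx : IsOfFinOrder x) : x ^ (2 * n) = 1 := by
  obtain ⟨ζ, hζ⟩ :=
    IsCyclotomicExtension.exists_isPrimitiveRoot ℚ K (Set.mem_singleton n) (NeZero.ne n)
  obtain ⟨r, rfl⟩ := hζ.exists_neg_pow_of_isOfFinOrder hn hx
  rw [← pow_mul, mul_comm, pow_mul, (even_two_mul n).neg_pow, pow_mul', hζ.pow_eq_one, one_pow,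
    one_pow]

theorem Complex.pow_two_mul_eq_one_of_isOfFinOrder_of_mem_adjoin {n : ℕ} [NeZero n] (hn : Odd n)
    {x : ℂ} (hmem : x ∈ IntermediateField.adjoin ℚ {b : ℂ | b ^ n = 1}) (hx : IsOfFinOrder x) :
    x ^ (2 * n) = 1 := by
  have hroots : {b : ℂ | b ^ n = 1} = {b : ℂ | ∃ k ∈ ({n} : Set ℕ), k ≠ 0 ∧ b ^ k = 1} := by
    simp [NeZero.ne n]
  let K := IntermediateField.adjoin ℚ {b : ℂ | ∃ k ∈ ({n} : Set ℕ), k ≠ 0 ∧ b ^ k = 1}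
  have : IsCyclotomicExtension {n} ℚ K :=
    IntermediateField.isCyclotomicExtension_adjoin_of_exists_isPrimitiveRoot _ _ _ fun k hk hk0 =>
      ⟨_, Complex.isPrimitiveRoot_exp k hk0⟩
  have : NumberField K := IsCyclotomicExtension.numberField {n} ℚ K
  rw [hroots] at hmem
  have := IsCyclotomicExtension.pow_two_mul_eq_one_of_isOfFinOrder hn
    (x := (⟨x, hmem⟩ : K)) (isOfFinOrder_iff_pow_eq_one.2 ?_)
  · simpa using congrArg Subtype.val this
  · obtain ⟨m, hm, hxm⟩ := isOfFinOrder_iff_pow_eq_one.1 hx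
    exact ⟨m, hm, Subtype.ext (by simpa using hxm)⟩

theorem ZMod.stdAddChar_pow_eq_one {n : ℕ} [NeZero n] (x : ZMod n) : stdAddChar x ^ n = 1 := by
  rw [← AddChar.map_nsmul_eq_pow, nsmul_eq_mul, ZMod.natCast_self, zero_mul,
    AddChar.map_zero_eq_one]

theorem zmodFourier_eq_sum_stdAddChar (n : ℕ) [NeZero n] (u : ZMod n → ℂ) (l : ZMod n) :
    zmodFourier n u l = ∑ t, u t * ZMod.stdAddChar (l * t) := by
  refine Finset.sum_congr rfl fun t _ => ?_
  rw [show l * t = ((l.val * t.val : ℕ) : ZMod n) by simp, ZMod.stdAddChar_apply,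
    ZMod.toCircle_natCast]
  push_cast
  rfl

theorem odd_spectral_unit_eigenvalues_are_2nth_roots_general
    (n : ℕ) [NeZero n] (hnodd : Odd n)
    (u : ZMod n → ℚ)
    (hfin : ∃ m : ℕ, 1 ≤ m ∧ Matrix.circulant u ^ m = 1) :
    ∀ l : ZMod n, (zmodFourier n (fun t => (u t : ℂ)) l) ^ (2 * n) = 1 := by
  intro l
  obtain ⟨m, hm, hpow⟩ := hfin
  have hpowℂ : circulant (fun t => (u t : ℂ)) ^ m = 1 := by
    rw [← map_circulant,
      show (circulant u).map ((↑) : ℚ → ℂ) = (Rat.castHom ℂ).mapMatrix (circulant u) from rfl,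
      ← map_pow, hpow, map_one]
  -- the eigenvalue of the character `t ↦ stdAddChar (-l * t)` is `ξ_l`
  have hξm := addChar_sum_pow_eq_one_of_circulant_pow_eq_one hpowℂ (ZMod.stdAddChar.mulShift (-l))
  simp only [AddChar.mulShift_apply, neg_mul_neg] at hξm
  rw [zmodFourier_eq_sum_stdAddChar]
  refine Complex.pow_two_mul_eq_one_of_isOfFinOrder_of_mem_adjoin hnodd ?_
    (isOfFinOrder_iff_pow_eq_one.2 ⟨m, hm, hξm⟩)
  refine sum_mem fun t _ => mul_mem ?_ (IntermediateField.subset_adjoin _ _ ?_)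
  · exact IntermediateField.algebraMap_mem _ (u t)
  · exact ZMod.stdAddChar_pow_eq_one _

/-- If `n` is odd and `U = M(u)` is a rational circulant matrix with `U·Uᵀ = 1` and
`U^m = 1` for some `m ≥ 1`, then every Fourier coefficient (eigenvalue) `ξ_l` of `u`
satisfies `ξ_l ^ (2n) = 1`. -/
theorem odd_spectral_unit_eigenvalues_are_2nth_roots
    (n : ℕ) [NeZero n] (hn : 0 < n) (hnodd : Odd n)
    (u : ZMod n → ℚ)
    (hunit : Matrix.circulant u * (Matrix.circulant u)ᵀ = 1)
    (hfin : ∃ m : ℕ, 1 ≤ m ∧ Matrix.circulant u ^ m = 1) :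
    ∀ l : ZMod n, (zmodFourier n (fun t => (u t : ℂ)) l) ^ (2 * n) = 1 :=
  odd_spectral_unit_eigenvalues_are_2nth_roots_general n hnodd u hfin
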